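/- arXiv:1502.07307 — 10 statements merged into one kernel-verified Lean document; each statement's English description precedes it below -/
import Mathlib

section
/- With X1 = 25n^2(1+2u-u^2) + 10n(1+2u+3u^2-2u^3)v^2 - 2(1+u^2)(u^2-2u-1)v^4, X2 = 25n^2(u^2+2u-1) + 10n(1-2u+3u^2+2u^3)v^2 + 2(1+u^2)(u^2+2u-1)v^4, X3 = 25n^2(1-2u-u^2) - 10n(1+3u^2)v^2 + 2(1+u^2)(u^2-2u-1)v^4, X4 = 25n^2(u^2-2u-1) - 10n(1+3u^2)v^2 - 2(1+u^2)(u^2+2u-1)v^4, and T = 10n(u^2-1)v(25n^2(1+u^2) + 10nu(3+u^2)v^2 + 2(1+u^2)^2 v^4)(X1+X2), the identity T^2 = n(X1^5 + X2^5 + X3^5 + X4^5) holds for all integers n, u, v. -/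
theorem stmt_4 (n u v : ℤ) :
    let X1 := 25*n^2*(1 + 2*u - u^2) + 10*n*(1 + 2*u + 3*u^2 - 2*u^3)*v^2
                - 2*(1 + u^2)*(u^2 - 2*u - 1)*v^4
    let X2 := 25*n^2*(u^2 + 2*u - 1) + 10*n*(1 - 2*u + 3*u^2 + 2*u^3)*v^2
                + 2*(1 + u^2)*(u^2 + 2*u - 1)*v^4
    let X3 := 25*n^2*(1 - 2*u - u^2) - 10*n*(1 + 3*u^2)*v^2
                + 2*(1 + u^2)*(u^2 - 2*u - 1)*v^4
    let X4 := 25*n^2*(u^2 - 2*u - 1) - 10*n*(1 + 3*u^2)*v^2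
                - 2*(1 + u^2)*(u^2 + 2*u - 1)*v^4
    let T := 10*n*(u^2 - 1)*v*(25*n^2*(1 + u^2) + 10*n*u*(3 + u^2)*v^2
                + 2*(1 + u^2)^2*v^4)*(X1 + X2)
    T^2 = n * (X1^5 + X2^5 + X3^5 + X4^5) := by intro X1 X2 X3 X4 T; simp only [X1,X2,X3,X4,T]; ring
end

section
/- For all integers m, n, t, setting K = 10m^2(m^2-n^4)^2(m^2+n^4) t^4, X1 = K - 20mn^2(m^2-n^4)t^2 - 1, X2 = K + 20mn^2(m^2-n^4)t^2 - 1, X3 = K + 20m^2(m^2-n^4)t^2 - 1, X4 = K - 20m^2(m^2-n^4)t^2 - 1, and T = 400m^2 n (n^4-m^2)^2 t^3 (K + 1), the identity T^2 = m(X1^5 - X2^5) + n^2(X3^5 - X4^5) holds. -/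
theorem stmt_5 (m n t : ℤ) :
    let K := 10*m^2*(m^2 - n^4)^2*(m^2 + n^4)*t^4
    let X1 := K - 20*m*n^2*(m^2 - n^4)*t^2 - 1
    let X2 := K + 20*m*n^2*(m^2 - n^4)*t^2 - 1
    let X3 := K + 20*m^2*(m^2 - n^4)*t^2 - 1
    let X4 := K - 20*m^2*(m^2 - n^4)*t^2 - 1
    let T := 400*m^2*n*(n^4 - m^2)^2*t^3*(K + 1)
    T^2 = m*(X1^5 - X2^5) + n^2*(X3^5 - X4^5) := by intro K X1 X2 X3 X4 T; simp only [K, X1, X2, X3, X4, T]; ring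
end

section
/- For all integers n, t, w, setting X1 = 2w^4 + 10n t^2 w^2 - 25n^2 t^4, X2 = 25n^2 t^4 + 10n t^2 w^2 - 2w^4, X3 = 10n t^2 w^2, and T = 5ntw(25n^2 t^4 + 2w^4)(X2 - X1), the identity T^2 = n(X1^5 + X2^5 - 2 X3^5) holds. -/
theorem stmt_7 (n t w : ℤ) :
    let X1 := 2*w^4 + 10*n*t^2*w^2 - 25*n^2*t^4
    let X2 := 25*n^2*t^4 + 10*n*t^2*w^2 - 2*w^4
    let X3 := 10*n*t^2*w^2
    let T := 5*n*t*w*(25*n^2*t^4 + 2*w^4)*(X2 - X1)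
    T^2 = n*(X1^5 + X2^5 - 2*X3^5) := by intro X1 X2 X3 T; simp only [X1,X2,X3,T]; ring
end

section
/- For all integers t, setting X1 = (1/2)(t^2-1)(t^3+5t^2-t-1), X2 = (1/2)(1-t^2)(t^3-5t^2-t+1), X3 = 4t^4 (working over rationals, or equivalently with t replaced by 2u+1 and dividing by 4 over the integers), there exists T with T^2 = X1^5 + X2^5 + X3^5; explicitly, with a = -2t^2, b = 1-3t^2, T = b^5 - 5(b-a)(b^2 - X1)(a^2 + X1) satisfies T^2 = X1^5 + X2^5 + X3^5. -/
theorem stmt_9 (t : ℚ) :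
    let X1 := (1/2 : ℚ)*(t^2 - 1)*(t^3 + 5*t^2 - t - 1)
    let X2 := (1/2 : ℚ)*(1 - t^2)*(t^3 - 5*t^2 - t + 1)
    let X3 := (4 : ℚ)*t^4
    let a := (-2 : ℚ)*t^2
    let b := (1 : ℚ) - 3*t^2
    let T := b^5 - 5*(b - a)*(b^2 - X1)*(a^2 + X1)
    T^2 = X1^5 + X2^5 + X3^5 := by simp only []; ring
end

section
/- For u an integer, let Y1(u), Y2(u), Y3(u) be the integer values Y_i = X_i(2u+1)/4 where X1(t) = (1/2)(t^2-1)(t^3+5t^2-t-1), X2(t) = (1/2)(1-t^2)(t^3-5t^2-t+1), X3(t) = 4t^4. Then 8*Y2(u) + (1 - 18u - 44u^2 - 8u^3 + 16u^4)(2u+1) = 1, and consequently gcd(Y2(u), Y3(u)) = 1 for every integer u. -/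
theorem stmt_11 (u Y2 : ℤ)
    (hY2 : 8*Y2 = (1 - (2*u+1)^2)*((2*u+1)^3 - 5*(2*u+1)^2 - (2*u+1) + 1)) :
    8*Y2 + (1 - 18*u - 44*u^2 - 8*u^3 + 16*u^4)*(2*u+1) = 1 ∧
    Int.gcd Y2 ((2*u+1)^4) = 1 := by
  have h1 : 8*Y2 + (1 - 18*u - 44*u^2 - 8*u^3 + 16*u^4)*(2*u+1) = 1 := by
    rw [hY2]; ring
  refine ⟨h1, ?_⟩
  have hc : IsCoprime Y2 (2*u+1) := ⟨8, 1 - 18*u - 44*u^2 - 8*u^3 + 16*u^4, by linarith⟩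
  exact Int.isCoprime_iff_gcd_eq_one.mp (hc.pow_right)
end

section
/- Let F_n(x,y,z) = (x+y+z)^{2n+1} + (-x+z-y)^{2n+1} + (x-y-z)^{2n+1} + (-x+y-z)^{2n+1}. Then the polynomial x*y*z divides F_n(x,y,z) in Z[x,y,z] for every positive integer n. -/
open MvPolynomial

private noncomputable def PP (m : ℕ) : MvPolynomial (Fin 3) ℤ :=
  (X 0 + X 1 + X 2)^m + (-X 0 + X 2 - X 1)^m + (X 0 - X 1 - X 2)^m + (-X 0 + X 1 - X 2)^m

private lemma PP_rec (m : ℕ) : PP (m+4) =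
    (2*(X 0^2 + X 1^2 + X 2^2)) * PP (m+2) + (8*(X 0 * X 1 * X 2)) * PP (m+1)
      - (X 0^4 + X 1^4 + X 2^4 - 2*X 0^2*X 1^2 - 2*X 0^2*X 2^2 - 2*X 1^2*X 2^2) * PP m := by
  simp only [PP]
  ring

private lemma PP_dvd (k : ℕ) : (X 0 * X 1 * X 2 : MvPolynomial (Fin 3) ℤ) ∣ PP (2*k+1) ∧
    (X 0 * X 1 * X 2 : MvPolynomial (Fin 3) ℤ) ∣ PP (2*k+3) := by
  induction k with
  | zero =>
    constructor
    · have : PP 1 = 0 := by simp only [PP]; ring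
      simp [this]
    · exact ⟨24, by simp only [PP]; ring⟩
  | succ k ih =>
    refine ⟨by simpa [mul_add] using ih.2, ?_⟩
    have h : 2*(k+1)+3 = (2*k+1)+4 := by ring
    rw [h, PP_rec]
    have h2 : (2*k+1)+2 = 2*k+3 := by ring
    rw [h2]
    exact dvd_sub (dvd_add (ih.2.mul_left _) ((dvd_mul_left _ 8).mul_right _))
      (ih.1.mul_left _)

theorem stmt_13 (n : ℕ) (hn : 0 < n) :
    let x : MvPolynomial (Fin 3) ℤ := X 0
    let y : MvPolynomial (Fin 3) ℤ := X 1
    let z : MvPolynomial (Fin 3) ℤ := X 2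
    x * y * z ∣ (x + y + z)^(2*n+1) + (-x + z - y)^(2*n+1)
        + (x - y - z)^(2*n+1) + (-x + y - z)^(2*n+1) := by
  intro x y z
  obtain ⟨m, rfl⟩ := Nat.exists_eq_add_of_lt hn
  have h : 2*(0+m+1)+1 = 2*m+3 := by ring
  rw [h]
  exact (PP_dvd m).2
end

section
/- Let F_n be as above and let φ_2(F_n) denote the largest k such that 2^k divides every coefficient of F_n. Then φ_2(F_n) = ν_2(n) + 3 for every positive integer n, where ν_2 is the 2-adic valuation. -/
/-!
By the multinomial theorem, the coefficient of `x^a y^b z^c` (with `a + b + c = 2n + 1`) is the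
multinomial coefficient `M(a, b, c)` times `1 + (-1)^(a+b) + (-1)^(b+c) + (-1)^(a+c)`; as
`a + b + c` is odd this sign sum is `(1 - (-1)^b)(1 - (-1)^c)`, i.e. `4` when `b, c` are odd and
`0` otherwise. For odd `b, c` the identity `M(a, b, c) · b · c = (2n + 1)(2n) · M(a, b - 1, c - 1)`
gives `2^(ν₂(n) + 1) ∣ M(a, b, c)`, and at `(a, b, c) = (2n - 1, 1, 1)` it gives
`M = (2n + 1)(2n)`, so that coefficient is `8n(2n + 1)`, of valuation exactly `ν₂(n) + 3`.
-/

open MvPolynomial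

namespace Finsupp

variable {α : Type*}

theorem multinomial_add_single_mul (d : α →₀ ℕ) (i : α) :
    (d + single i 1).multinomial * (d i + 1) = (d.degree + 1) * d.multinomial := by
  classical
  have hupdate : (d + single i 1).update i 0 = d.update i 0 := by
    ext k
    by_cases hk : k = i <;> simp [update_apply, hk]
  have hdegree : (d + single i 1).degree = d.degree + 1 := by
    rw [map_add, degree_single]
  rw [multinomial_update i (d + single i 1), multinomial_update i d, hupdate]
  change (d + single i 1).degree.choose _ * _ * _ = _ * (d.degree.choose _ * _)
  rw [hdegree, add_apply, single_eq_same, mul_right_comm, ← Nat.add_one_mul_choose_eq, mul_assoc]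

theorem multinomial_single (a : α) (n : ℕ) : (single a n).multinomial = 1 := by
  classical
  rw [multinomial_eq_of_support_subset support_single_subset, Nat.multinomial_singleton]

theorem multinomial_add_single_add_single_mul (d : α →₀ ℕ) {i j : α} (hij : i ≠ j) :
    (d + single i 1 + single j 1).multinomial * (d i + 1) * (d j + 1)
      = (d.degree + 2) * (d.degree + 1) * d.multinomial := by
  have hj : (d + single i 1 : α →₀ ℕ) j = d j := by rw [add_apply, single_eq_of_ne' hij, add_zero]
  have h := multinomial_add_single_mul (d + single i 1) j
  rw [hj, map_add, degree_single] at h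
  rw [mul_right_comm, h, mul_assoc, multinomial_add_single_mul, mul_assoc]

theorem multinomial_single_add_single_add_single (a : ℕ) {i j k : α} (hij : i ≠ j) (hik : i ≠ k)
    (hjk : j ≠ k) : (single i a + single j 1 + single k 1).multinomial = (a + 2) * (a + 1) := by
  have h := (single i a).multinomial_add_single_add_single_mul hjk
  rwa [single_eq_of_ne' hij, single_eq_of_ne' hik, degree_single, multinomial_single, zero_add,
    mul_one, mul_one, mul_one] at h

theorem dvd_multinomial_add_single_add_single {m : ℕ} (d : α →₀ ℕ) {i j : α} (hij : i ≠ j)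
    (hm : m ∣ (d.degree + 2) * (d.degree + 1))
    (hi : m.Coprime (d i + 1)) (hj : m.Coprime (d j + 1)) :
    m ∣ (d + single i 1 + single j 1).multinomial := by
  refine (hi.mul_right hj).dvd_of_dvd_mul_right ?_
  rw [← mul_assoc, multinomial_add_single_add_single_mul d hij]
  exact hm.mul_right _

end Finsupp

theorem one_add_pairwise_mul_eq_of_mul_mul_eq_neg_one {R : Type*} [CommRing R] {s₀ s₁ s₂ : R}
    (h₁ : s₁ ^ 2 = 1) (h₂ : s₂ ^ 2 = 1) (h : s₀ * s₁ * s₂ = -1) :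
    1 + s₀ * s₁ + s₁ * s₂ + s₀ * s₂ = (1 - s₁) * (1 - s₂) := by
  linear_combination (s₁ + s₂) * h - s₀ * s₁ * h₂ - s₀ * s₂ * h₁

theorem coeff_sum_signed_linear_pow {N : ℕ} (hN : Odd N) (d : Fin 3 →₀ ℕ) :
    coeff d ((X 0 + X 1 + X 2 : MvPolynomial (Fin 3) ℤ) ^ N + (-X 0 + X 2 - X 1) ^ N
        + (X 0 - X 1 - X 2) ^ N + (-X 0 + X 1 - X 2) ^ N)
      = if d.degree = N then
          (d.multinomial : ℤ) * ((1 - (-1) ^ d 1) * (1 - (-1) ^ d 2)) else 0 := by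
  have h₀ : (X 0 + X 1 + X 2 : MvPolynomial (Fin 3) ℤ) = ∑ i, (![1, 1, 1] : Fin 3 → ℤ) i • X i := by
    simp [Fin.sum_univ_three]
  have h₁ : (-X 0 + X 2 - X 1 : MvPolynomial (Fin 3) ℤ) = ∑ i, ![-1, -1, 1] i • X i := by
    simp [Fin.sum_univ_three]; ring
  have h₂ : (X 0 - X 1 - X 2 : MvPolynomial (Fin 3) ℤ) = ∑ i, ![1, -1, -1] i • X i := by
    simp [Fin.sum_univ_three]; ring
  have h₃ : (-X 0 + X 1 - X 2 : MvPolynomial (Fin 3) ℤ) = ∑ i, ![-1, 1, -1] i • X i := by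
    simp [Fin.sum_univ_three]; ring
  simp only [h₀, h₁, h₂, h₃, coeff_add, coeff_linearCombination_X_pow_of_fintype]
  rw [show (d.sum fun _ m ↦ m) = d.degree from rfl]
  split_ifs with hd
  · have hpar : (-1 : ℤ) ^ d 0 * (-1) ^ d 1 * (-1) ^ d 2 = -1 := by
      rw [← pow_add, ← pow_add, ← Fin.sum_univ_three, ← Finsupp.degree_eq_sum, hd,
        hN.neg_one_pow]
    simp only [Finsupp.prod_fintype _ _ (fun _ ↦ pow_zero _), Fin.prod_univ_three,
      Matrix.cons_val_zero, Matrix.cons_val_one, Matrix.cons_val_two, Matrix.head_cons,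
      Matrix.tail_cons, one_pow, mul_one]
    have hsq : ∀ k : ℕ, ((-1 : ℤ) ^ k) ^ 2 = 1 := fun k ↦ by rw [← pow_mul, mul_comm, pow_mul]; simp
    rw [← one_add_pairwise_mul_eq_of_mul_mul_eq_neg_one (hsq _) (hsq _) hpar]
    ring
  · simp

theorem two_pow_dvd_multinomial {n : ℕ} (d : Fin 3 →₀ ℕ) (hd : d.degree = 2 * n + 1)
    (h₁ : Odd (d 1)) (h₂ : Odd (d 2)) :
    2 ^ (padicValNat 2 n + 1) ∣ d.multinomial := by
  set e := d - Finsupp.single 1 1 - Finsupp.single 2 1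
  have hde : d = e + Finsupp.single 1 1 + Finsupp.single 2 1 := by
    have := h₁.pos
    have := h₂.pos
    ext k
    fin_cases k <;> simp [e] <;> omega
  have he : e.degree + 2 = 2 * n + 1 := by
    rw [← hd, hde, map_add, map_add, Finsupp.degree_single, Finsupp.degree_single]
  have hcop : ∀ {k}, Odd k → Nat.Coprime (2 ^ (padicValNat 2 n + 1)) k :=
    fun hk ↦ (Nat.coprime_two_left.mpr hk).pow_left _
  rw [hde] at h₁ h₂ ⊢
  refine e.dvd_multinomial_add_single_add_single (by decide) ?_ (hcop (by simpa using h₁))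
    (hcop (by simpa using h₂))
  rw [he, show e.degree + 1 = n * 2 by omega, pow_succ]
  exact (mul_dvd_mul_right pow_padicValNat_dvd 2).mul_left _

theorem two_pow_dvd_multinomial_mul_sign {n : ℕ} (d : Fin 3 →₀ ℕ) (hd : d.degree = 2 * n + 1) :
    (2 : ℤ) ^ (padicValNat 2 n + 3) ∣ d.multinomial * ((1 - (-1) ^ d 1) * (1 - (-1) ^ d 2)) := by
  rcases Nat.even_or_odd (d 1) with h₁ | h₁
  · simp [h₁.neg_one_pow]
  rcases Nat.even_or_odd (d 2) with h₂ | h₂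
  · simp [h₂.neg_one_pow]
  rw [h₁.neg_one_pow, h₂.neg_one_pow, show padicValNat 2 n + 3 = padicValNat 2 n + 1 + 2 from rfl,
    pow_add]
  exact mul_dvd_mul (mod_cast two_pow_dvd_multinomial d hd h₁ h₂) (by norm_num)

theorem le_padicValNat_add_three_of_two_pow_dvd {n k : ℕ} (hn : n ≠ 0)
    (h : 2 ^ k ∣ (2 * n + 1) * (2 * n) * 4) :
    k ≤ padicValNat 2 n + 3 := by
  have h' : 2 ^ k ∣ 2 ^ 3 * ((2 * n + 1) * n) := by
    rwa [show 2 ^ 3 * ((2 * n + 1) * n) = (2 * n + 1) * (2 * n) * 4 by ring]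
  have hval : padicValNat 2 (2 ^ 3 * ((2 * n + 1) * n)) = padicValNat 2 n + 3 := by
    rw [padicValNat.mul (by positivity) (by positivity), padicValNat.mul (by omega) hn,
      padicValNat.prime_pow, padicValNat.eq_zero_of_not_dvd (show ¬2 ∣ 2 * n + 1 by omega)]
    omega
  rw [← hval]
  exact (padicValNat_dvd_iff_le (by positivity)).mp h'

theorem stmt_14 (n : ℕ) (hn : 0 < n) :
    let x : MvPolynomial (Fin 3) ℤ := X 0
    let y : MvPolynomial (Fin 3) ℤ := X 1
    let z : MvPolynomial (Fin 3) ℤ := X 2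
    let F := (x + y + z)^(2*n+1) + (-x + z - y)^(2*n+1)
        + (x - y - z)^(2*n+1) + (-x + y - z)^(2*n+1)
    IsGreatest {k : ℕ | ∀ d : Fin 3 →₀ ℕ, (2:ℤ)^k ∣ F.coeff d}
      (padicValNat 2 n + 3) := by
  intro x y z F
  have hF : ∀ d, F.coeff d = _ := coeff_sum_signed_linear_pow (odd_two_mul_add_one n)
  refine ⟨fun d ↦ ?_, fun k hk ↦ ?_⟩
  · rw [hF]
    split_ifs with hd
    · exact two_pow_dvd_multinomial_mul_sign d hd
    · exact dvd_zero _
  · set d₀ : Fin 3 →₀ ℕ := Finsupp.single 0 (2 * n - 1) + Finsupp.single 1 1 + Finsupp.single 2 1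
    have hdeg : d₀.degree = 2 * n + 1 := by
      simp only [d₀, map_add, Finsupp.degree_single]
      omega
    have h := hk d₀
    rw [hF, if_pos hdeg, Finsupp.multinomial_single_add_single_add_single _ (by decide)
      (by decide) (by decide), show 2 * n - 1 + 2 = 2 * n + 1 by omega,
      show 2 * n - 1 + 1 = 2 * n by omega] at h
    norm_num [d₀, Finsupp.single_apply, Fin.ext_iff] at h
    exact le_padicValNat_add_three_of_two_pow_dvd hn.ne' (by exact_mod_cast h)
end

section
/- Let p be an odd prime and n a positive integer such that 2n+1 = p^m for some m ≥ 1. Then with F_n(x,y,z) = (x+y+z)^{2n+1} + (-x+z-y)^{2n+1} + (x-y-z)^{2n+1} + (-x+y-z)^{2n+1}, we have φ_p(F_n) = 1, i.e., p divides every coefficient of F_n but p^2 does not divide all coefficients. -/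
open MvPolynomial

private lemma frob3 {R : Type*} [CommRing R] (p : ℕ) [Fact p.Prime] [CharP R p] (m : ℕ)
    (a b c : R) : (a + b + c) ^ p ^ m = a ^ p ^ m + b ^ p ^ m + c ^ p ^ m := by
  rw [add_pow_char_pow, add_pow_char_pow]

theorem stmt_15 (p : ℕ) (hp : p.Prime) (hodd : p ≠ 2) (n m : ℕ) (hn : 0 < n)
    (hm : 1 ≤ m) (h : 2*n + 1 = p^m) :
    let x : MvPolynomial (Fin 3) ℤ := X 0
    let y : MvPolynomial (Fin 3) ℤ := X 1
    let z : MvPolynomial (Fin 3) ℤ := X 2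
    let F := (x + y + z)^(2*n+1) + (-x + z - y)^(2*n+1)
        + (x - y - z)^(2*n+1) + (-x + y - z)^(2*n+1)
    (∀ d : Fin 3 →₀ ℕ, (p:ℤ) ∣ F.coeff d) ∧
    ¬(∀ d : Fin 3 →₀ ℕ, (p:ℤ)^2 ∣ F.coeff d) := by
  intro x y z F
  haveI := Fact.mk hp
  have hO : Odd (p ^ m) := (hp.odd_of_ne_two hodd).pow
  constructor
  · -- p divides every coefficient
    intro d
    have hmap : (MvPolynomial.map (Int.castRingHom (ZMod p)) F) = 0 := by
      show MvPolynomial.map (Int.castRingHom (ZMod p))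
        ((x + y + z)^(2*n+1) + (-x + z - y)^(2*n+1)
          + (x - y - z)^(2*n+1) + (-x + y - z)^(2*n+1)) = 0
      simp only [map_add, map_pow, map_neg, map_sub, MvPolynomial.map_X, x, y, z]
      set A : MvPolynomial (Fin 3) (ZMod p) := X 0
      set B : MvPolynomial (Fin 3) (ZMod p) := X 1
      set C : MvPolynomial (Fin 3) (ZMod p) := X 2
      rw [h]
      have e1 : (A + B + C) ^ p ^ m = A ^ p ^ m + B ^ p ^ m + C ^ p ^ m := frob3 p m A B C
      have e2 : (-A + C - B) ^ p ^ m = (-A) ^ p ^ m + (-B) ^ p ^ m + C ^ p ^ m := by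
        rw [show -A + C - B = -A + -B + C by ring, frob3]
      have e3 : (A - B - C) ^ p ^ m = A ^ p ^ m + (-B) ^ p ^ m + (-C) ^ p ^ m := by
        rw [show A - B - C = A + -B + -C by ring, frob3]
      have e4 : (-A + B - C) ^ p ^ m = (-A) ^ p ^ m + B ^ p ^ m + (-C) ^ p ^ m := by
        rw [show -A + B - C = -A + B + -C by ring, frob3]
      rw [e1, e2, e3, e4, hO.neg_pow, hO.neg_pow, hO.neg_pow]
      ring
    have := congrArg (MvPolynomial.coeff d) hmap
    rw [MvPolynomial.coeff_map] at this
    simpa using (ZMod.intCast_zmod_eq_zero_iff_dvd _ p).mp this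
  · -- p^2 does not divide all coefficients
    intro hall
    set g : Fin 3 → Polynomial ℤ := ![Polynomial.X, 1, 1] with hg
    set φ : MvPolynomial (Fin 3) ℤ →+* Polynomial ℤ :=
      MvPolynomial.eval₂Hom (Polynomial.C : ℤ →+* Polynomial ℤ) g with hφ
    have hdvd : ∀ j : ℕ, (p:ℤ)^2 ∣ (φ F).coeff j := by
      intro j
      have : φ F = ∑ d ∈ F.support,
          Polynomial.C (F.coeff d) * ∏ i ∈ d.support, g i ^ d i := by
        rw [hφ, MvPolynomial.coe_eval₂Hom, MvPolynomial.eval₂_eq]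
      rw [this, Polynomial.finset_sum_coeff]
      refine Finset.dvd_sum fun d _ => ?_
      rw [Polynomial.coeff_C_mul]
      exact Dvd.dvd.mul_right (hall d) _
    have hNodd : Odd (2*n+1) := ⟨n, by ring⟩
    have hφF : φ F = (Polynomial.X + Polynomial.C (2:ℤ))^(2*n+1)
        + (Polynomial.X + Polynomial.C (-2:ℤ))^(2*n+1) - 2 * Polynomial.X^(2*n+1) := by
      show φ ((x + y + z)^(2*n+1) + (-x + z - y)^(2*n+1)
          + (x - y - z)^(2*n+1) + (-x + y - z)^(2*n+1)) = _
      have hx : φ x = Polynomial.X := by simp [hφ, x, hg]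
      have hy : φ y = 1 := by simp [hφ, y, hg]
      have hz : φ z = 1 := by simp [hφ, z, hg]
      have hneg : (-Polynomial.X + 1 - 1 : Polynomial ℤ)^(2*n+1) = -(Polynomial.X^(2*n+1)) := by
        rw [show (-Polynomial.X + 1 - 1 : Polynomial ℤ) = -Polynomial.X by ring, hNodd.neg_pow]
      simp only [map_add, map_pow, map_neg, map_sub, hx, hy, hz, hneg]
      rw [show Polynomial.C (2:ℤ) = 2 by norm_num]
      ring
    -- the key coefficient
    set k : ℕ := 2 * p ^ (m-1) with hk
    have hppos : 0 < p := hp.pos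
    have hk0 : k ≠ 0 := by positivity
    have hkle : k ≤ p ^ m := by
      calc k = 2 * p ^ (m-1) := rfl
        _ ≤ p * p ^ (m-1) := by
            have : 2 ≤ p := hp.two_le
            exact Nat.mul_le_mul_right _ this
        _ = p ^ m := by
            rw [← pow_succ']
            congr 1
            omega
    set j : ℕ := p ^ m - k with hj
    have hjk : p ^ m - j = k := Nat.sub_sub_self hkle
    have hjne : p ^ m ≠ j := by
      have : j < p ^ m := Nat.sub_lt (pow_pos hppos m) (Nat.pos_of_ne_zero hk0)
      omega
    have hkeven : Even k := ⟨p ^ (m-1), by rw [hk]; ring⟩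
    have hcoeff : (φ F).coeff j = 2^(k+1) * ((p^m).choose k : ℤ) := by
      rw [hφF, h, show (2 : Polynomial ℤ) * Polynomial.X^(p^m)
            = Polynomial.C 2 * Polynomial.X^(p^m) by norm_num,
        Polynomial.coeff_sub, Polynomial.coeff_add,
        Polynomial.coeff_X_add_C_pow, Polynomial.coeff_X_add_C_pow, Polynomial.coeff_C_mul,
        Polynomial.coeff_X_pow, if_neg (Ne.symm hjne), hjk, hkeven.neg_pow,
        show (p^m).choose j = (p^m).choose k by
          rw [hj, Nat.choose_symm hkle]]
      push_cast
      ring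
    have hdvd2 : (p:ℤ)^2 ∣ 2^(k+1) * ((p^m).choose k : ℤ) := hcoeff ▸ hdvd j
    have hdvdN : p^2 ∣ 2^(k+1) * (p^m).choose k := by
      have := hdvd2
      rw [show ((p:ℤ))^2 = ((p^2 : ℕ) : ℤ) by push_cast; ring,
        show (2:ℤ)^(k+1) * ((p^m).choose k : ℤ) = ((2^(k+1) * (p^m).choose k : ℕ) : ℤ) by
          push_cast; ring] at this
      exact_mod_cast this
    have hcop : Nat.Coprime (p^2) (2^(k+1)) :=
      Nat.Coprime.pow _ _ ((Nat.coprime_primes hp Nat.prime_two).mpr hodd)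
    have hdvdC : p^2 ∣ (p^m).choose k := hcop.dvd_of_dvd_mul_left hdvdN
    -- but the multiplicity of p in the binomial coefficient is exactly 1
    have hmulk : multiplicity p k = m - 1 := by
      have hk' : k ≠ 0 := hk0
      rw [Nat.multiplicity_eq_factorization hp hk', hk,
        Nat.factorization_mul (by norm_num) (pow_ne_zero _ hppos.ne'),
        hp.factorization_pow]
      have h2 : (Nat.factorization 2) p = 0 :=
        Nat.factorization_eq_zero_of_not_dvd
          (fun hd => hodd ((Nat.prime_dvd_prime_iff_eq hp Nat.prime_two).mp hd))
      simp [h2]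
    have hemult : emultiplicity p ((p^m).choose k) = ((1 : ℕ) : ℕ∞) := by
      rw [hp.emultiplicity_choose_prime_pow hkle hk0, hmulk]
      congr 1
      omega
    have : ¬ p^2 ∣ (p^m).choose k := by
      apply not_pow_dvd_of_emultiplicity_lt
      rw [hemult]
      exact_mod_cast one_lt_two
    exact this hdvdC
end

section
/- Let p be an odd prime and n a positive integer such that 2n+1 is not a power of p. Then with F_n(x,y,z) = (x+y+z)^{2n+1} + (-x+z-y)^{2n+1} + (x-y-z)^{2n+1} + (-x+y-z)^{2n+1}, there exists a coefficient of F_n not divisible by p, i.e., φ_p(F_n) = 0. -/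
open MvPolynomial Finset

lemma aux_not_dvd_choose (p : ℕ) (hp : p.Prime) (n i : ℕ) (h : ¬ p ∣ n / p ^ i) :
    ¬ p ∣ n.choose (p ^ i) := by
  haveI : Fact p.Prime := ⟨hp⟩
  have H := Choose.choose_modEq_choose_mul_prod_range_choose (p := p) (n := n) (k := p ^ i) i
  have h1 : p ^ i / p ^ i = 1 := Nat.div_self (pow_pos hp.pos i)
  have h2 : ∀ t ∈ range i, (n / p ^ t % p).choose (p ^ i / p ^ t % p) = 1 := by
    intro t ht
    rw [mem_range] at ht
    have hq : p ^ i / p ^ t = p ^ (i - t) := Nat.pow_div ht.le hp.pos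
    have hz : p ^ (i - t) % p = 0 :=
      Nat.eq_zero_of_dvd_of_lt (Nat.dvd_mod_iff dvd_rfl |>.mpr (dvd_pow_self p (Nat.sub_ne_zero_of_lt ht))) (Nat.mod_lt _ hp.pos)
    rw [hq, hz, Nat.choose_zero_right]
  rw [h1, Nat.choose_one_right, Finset.prod_congr rfl h2, Finset.prod_const_one,
    Nat.cast_one, mul_one] at H
  intro hdvd
  apply h
  have h4 : (p : ℤ) ∣ (n.choose (p ^ i) : ℕ) := Int.natCast_dvd_natCast.mpr hdvd
  have h3 : (p : ℤ) ∣ ((n / p ^ i : ℕ) : ℤ) :=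
    (dvd_sub_right h4).mp (Int.ModEq.dvd H.symm)
  exact Int.natCast_dvd_natCast.mp h3


lemma aux_prod_X_pow (k : Fin 3 → ℕ) :
    (∏ i, (X i : MvPolynomial (Fin 3) ℤ) ^ k i)
      = monomial (Finsupp.equivFunOnFinite.symm k) 1 := by
  rw [monomial_eq, map_one, one_mul, Finsupp.prod]
  refine (Finset.prod_subset (Finset.subset_univ _) ?_).symm
  intro x _ hx
  have : k x = 0 := by simpa using Finsupp.notMem_support_iff.mp hx
  simp [this]

lemma aux_coeff_lin (g : Fin 3 → ℤ) (N : ℕ) (f : Fin 3 → ℕ) (hf : f 0 + f 1 + f 2 = N) :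
    coeff (Finsupp.equivFunOnFinite.symm f)
      ((C (g 0) * X 0 + C (g 1) * X 1 + C (g 2) * X 2 : MvPolynomial (Fin 3) ℤ) ^ N)
    = Nat.multinomial univ f * (g 0 ^ f 0 * g 1 ^ f 1 * g 2 ^ f 2) := by
  have e1 : (C (g 0) * X 0 + C (g 1) * X 1 + C (g 2) * X 2 : MvPolynomial (Fin 3) ℤ)
      = ∑ i, C (g i) * X i := by rw [Fin.sum_univ_three]
  rw [e1, Finset.sum_pow_eq_sum_piAntidiag, coeff_sum]
  have key : ∀ k ∈ piAntidiag (univ : Finset (Fin 3)) N,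
      coeff (Finsupp.equivFunOnFinite.symm f)
        ((Nat.multinomial univ k : MvPolynomial (Fin 3) ℤ) * ∏ i, (C (g i) * X i) ^ k i)
      = if k = f then (Nat.multinomial univ f : ℤ)
          * (g 0 ^ f 0 * g 1 ^ f 1 * g 2 ^ f 2) else 0 := by
    intro k _
    have e2 : (∏ i, (C (g i) * X i : MvPolynomial (Fin 3) ℤ) ^ k i)
        = monomial (Finsupp.equivFunOnFinite.symm k) (∏ i, g i ^ k i) := by
      simp_rw [mul_pow, ← C_pow]
      rw [Finset.prod_mul_distrib, ← map_prod, aux_prod_X_pow, C_mul_monomial, mul_one]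
    rw [e2, ← C_eq_coe_nat, C_mul_monomial, coeff_monomial]
    by_cases hk : k = f
    · subst hk
      simp [Fin.prod_univ_three, mul_assoc]
    · rw [if_neg (by simpa using fun hh => hk (Finsupp.equivFunOnFinite.symm.injective hh)),
        if_neg hk]
  rw [Finset.sum_congr rfl key, Finset.sum_ite_eq' _ f, if_pos]
  rw [mem_piAntidiag]
  exact ⟨by rw [Fin.sum_univ_three, hf], fun i _ => Finset.mem_univ i⟩

theorem stmt_16 (p : ℕ) (hp : p.Prime) (hodd : p ≠ 2) (n : ℕ) (hn : 0 < n)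
    (h : ∀ m : ℕ, 2*n + 1 ≠ p^m) :
    let x : MvPolynomial (Fin 3) ℤ := X 0
    let y : MvPolynomial (Fin 3) ℤ := X 1
    let z : MvPolynomial (Fin 3) ℤ := X 2
    let F := (x + y + z)^(2*n+1) + (-x + z - y)^(2*n+1)
        + (x - y - z)^(2*n+1) + (-x + y - z)^(2*n+1)
    ∃ d : Fin 3 →₀ ℕ, ¬ (p:ℤ) ∣ F.coeff d := by
  intro x y z F
  have hFdef : F = (X 0 + X 1 + X 2 : MvPolynomial (Fin 3) ℤ)^(2*n+1)
      + (-X 0 + X 2 - X 1)^(2*n+1) + (X 0 - X 1 - X 2)^(2*n+1)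
      + (-X 0 + X 1 - X 2)^(2*n+1) := rfl
  have hpodd : Odd p := hp.odd_of_ne_two hodd
  have hN0 : 2*n+1 ≠ 0 := by omega
  set i := (2*n+1).factorization p with hi
  have hpi : p ^ i ∣ 2*n+1 := Nat.ordProj_dvd _ _
  have hdi : ¬ p ∣ (2*n+1) / p ^ i := Nat.not_dvd_ordCompl hp hN0
  have hpile : p ^ i ≤ 2*n+1 := Nat.le_of_dvd (by omega) hpi
  have hine : p ^ i ≠ 2*n+1 := fun e => h i e.symm
  set M := 2*n+1 - p ^ i with hM
  have hM0 : M ≠ 0 := by omega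
  set j := M.factorization p with hj
  have hpj : p ^ j ∣ M := Nat.ordProj_dvd _ _
  have hdj : ¬ p ∣ M / p ^ j := Nat.not_dvd_ordCompl hp hM0
  have hpjle : p ^ j ≤ M := Nat.le_of_dvd (by omega) hpj
  set a := M - p ^ j with ha
  set b := p ^ i with hb
  set c := p ^ j with hc
  have hNodd : Odd (2*n+1) := ⟨n, by ring⟩
  have hbodd : Odd b := hpodd.pow
  have hcodd : Odd c := hpodd.pow
  have hMeven : Even M := Nat.Odd.sub_odd hNodd hbodd
  have haodd : Odd a := Nat.Even.sub_odd hpjle hMeven hcodd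
  have hsum : a + b + c = 2*n+1 := by omega
  set m := Nat.multinomial (univ : Finset (Fin 3)) ![a, b, c] with hm
  -- the four coefficient computations
  have hfv : (![a,b,c] : Fin 3 → ℕ) 0 = a ∧ (![a,b,c] : Fin 3 → ℕ) 1 = b
      ∧ (![a,b,c] : Fin 3 → ℕ) 2 = c := ⟨rfl, rfl, rfl⟩
  have hfsum : (![a,b,c] : Fin 3 → ℕ) 0 + (![a,b,c] : Fin 3 → ℕ) 1
      + (![a,b,c] : Fin 3 → ℕ) 2 = 2*n+1 := hsum
  set d : Fin 3 →₀ ℕ := Finsupp.equivFunOnFinite.symm ![a, b, c] with hd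
  refine ⟨d, ?_⟩
  have c1 := aux_coeff_lin ![1,1,1] (2*n+1) ![a,b,c] hfsum
  have c2 := aux_coeff_lin ![-1,-1,1] (2*n+1) ![a,b,c] hfsum
  have c3 := aux_coeff_lin ![1,-1,-1] (2*n+1) ![a,b,c] hfsum
  have c4 := aux_coeff_lin ![-1,1,-1] (2*n+1) ![a,b,c] hfsum
  simp only [Matrix.cons_val_zero, Matrix.cons_val_one, Matrix.head_cons, Matrix.cons_val_two,
    Matrix.tail_cons, map_one, map_neg, one_mul, neg_mul, neg_neg] at c1 c2 c3 c4
  have E2 : (-X 0 + X 2 - X 1 : MvPolynomial (Fin 3) ℤ) = -X 0 + -X 1 + X 2 := by ring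
  have E3 : (X 0 - X 1 - X 2 : MvPolynomial (Fin 3) ℤ) = X 0 + -X 1 + -X 2 := by ring
  have E4 : (-X 0 + X 1 - X 2 : MvPolynomial (Fin 3) ℤ) = -X 0 + X 1 + -X 2 := by ring
  have hF : MvPolynomial.coeff d F = 4 * (m : ℤ) := by
    rw [hd, hFdef, E2, E3, E4, coeff_add, coeff_add, coeff_add, c1, c2, c3, c4,
      haodd.neg_one_pow, hbodd.neg_one_pow, hcodd.neg_one_pow]
    push_cast [hm]
    ring
  -- multinomial factorisation
  have hmul : m = (2*n+1).choose b * M.choose c := by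
    have hu : (univ : Finset (Fin 3)) = insert 1 {0, 2} := by decide
    rw [hm, hu, Nat.multinomial_insert (by decide),
      Nat.multinomial_insert (by decide), Nat.multinomial_singleton]
    rw [Finset.sum_pair (by decide : (0 : Fin 3) ≠ 2)]
    simp only [Matrix.cons_val_zero, Matrix.cons_val_one, Matrix.head_cons, Matrix.cons_val_two,
      Matrix.tail_cons, mul_one, Finset.sum_singleton]
    have h1 : b + (a + c) = 2*n+1 := by omega
    have h2 : a + c = M := by omega
    rw [h1, h2]
    congr 1
    rw [show a = M - c from rfl, Nat.choose_symm hpjle]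
  intro hdvd
  rw [hF] at hdvd
  have hpZ : Prime (p : ℤ) := Nat.prime_iff_prime_int.mp hp
  rcases hpZ.dvd_mul.mp hdvd with h4 | hm'
  · have h4n : p ∣ 4 := by exact_mod_cast h4
    have : p ∣ 2 := hp.dvd_of_dvd_pow (n := 2) (by norm_num at h4n ⊢; exact h4n)
    exact hodd ((Nat.prime_dvd_prime_iff_eq hp Nat.prime_two).mp this)
  · have hmn : p ∣ m := Int.natCast_dvd_natCast.mp hm'
    rw [hmul] at hmn
    rcases (Nat.Prime.dvd_mul hp).mp hmn with h5 | h5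
    · exact aux_not_dvd_choose p hp (2*n+1) i hdi h5
    · exact aux_not_dvd_choose p hp M j hdj h5
end

section
/- For any prime p and any positive integer m, the binomial coefficient C(p^m, 2p^{m-1}) times C(2p^{m-1}, p^{m-1}) has p-adic valuation exactly 1, where p is an odd prime. -/
/-!
By Legendre's formula, `(p - 1) ν_p (C(n, k))` is the digit-sum defect `s(k) + s(n - k) - s(n)` in
base `p`. All numbers involved are single digits times powers of `p`: choosing `p^{m-1}` out of
`2p^{m-1}` has no carry (as `2 < p`), while choosing `2p^{m-1}` out of `p^m` loses exactly `p - 1`.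
-/

open Nat

namespace Nat

lemma digits_sum_mul_pow {b d : ℕ} (j : ℕ) (hdb : d < b) : (b.digits (d * b ^ j)).sum = d := by
  rcases Nat.eq_zero_or_pos d with rfl | hd
  · simp
  rw [mul_comm, digits_base_pow_mul (by omega) hd, digits_of_lt b d hd.ne' hdb]
  simp

end Nat

section

variable {p : ℕ} [Fact p.Prime]

lemma padicValNat_choose_add_mul_pow {a b : ℕ} (k : ℕ) (hab : b + a < p) :
    padicValNat p (choose ((b + a) * p ^ k) (a * p ^ k)) = 0 := by
  have hdefect : (p - 1) * padicValNat p (choose ((b + a) * p ^ k) (a * p ^ k)) = 0 := by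
    rw [add_mul, sub_one_mul_padicValNat_choose_eq_sub_sum_digits', ← add_mul,
      digits_sum_mul_pow k (by omega : a < p), digits_sum_mul_pow k (by omega : b < p),
      digits_sum_mul_pow k hab]
    omega
  exact (Nat.mul_eq_zero.mp hdefect).resolve_left (by have := (Fact.out : p.Prime).two_le; omega)

lemma padicValNat_choose_pow_succ_mul_pow {a : ℕ} (k : ℕ) (ha : 0 < a) (hap : a < p) :
    padicValNat p (choose (p ^ (k + 1)) (a * p ^ k)) = 1 := by
  have hp : 1 < p := (Fact.out : p.Prime).one_lt
  have hsplit : p ^ (k + 1) = (p - a) * p ^ k + a * p ^ k := by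
    rw [← add_mul, Nat.sub_add_cancel hap.le, pow_succ']
  have hdefect : (p - 1) * padicValNat p (choose (p ^ (k + 1)) (a * p ^ k)) = p - 1 := by
    rw [hsplit, sub_one_mul_padicValNat_choose_eq_sub_sum_digits', ← hsplit,
      digits_sum_mul_pow k hap, digits_sum_mul_pow k (by omega : p - a < p),
      ← one_mul (p ^ (k + 1)), digits_sum_mul_pow (k + 1) hp]
    omega
  exact Nat.eq_of_mul_eq_mul_left (by omega) (hdefect.trans (mul_one _).symm)

end

theorem stmt_17 (p : ℕ) (hp : p.Prime) (hodd : p ≠ 2) (m : ℕ) (hm : 1 ≤ m) :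
    padicValNat p (Nat.choose (p^m) (2*p^(m-1)) * Nat.choose (2*p^(m-1)) (p^(m-1))) = 1 := by
  have : Fact p.Prime := ⟨hp⟩
  obtain ⟨k, rfl⟩ : ∃ k, m = k + 1 := ⟨m - 1, by omega⟩
  have hp3 : 2 < p := lt_of_le_of_ne hp.two_le (Ne.symm hodd)
  have hle : 2 * p ^ k ≤ p ^ (k + 1) := by
    rw [pow_succ']
    exact Nat.mul_le_mul_right _ hp3.le
  have hfirst := padicValNat_choose_pow_succ_mul_pow (p := p) k two_pos hp3
  have hsecond := padicValNat_choose_add_mul_pow (p := p) (a := 1) (b := 1) k hp3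
  simp only [one_add_one_eq_two, one_mul] at hsecond
  rw [Nat.add_sub_cancel, padicValNat.mul (Nat.choose_pos hle).ne'
    (Nat.choose_pos (by omega)).ne', hfirst, hsecond]
end
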